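/- arXiv:2004.01500 — 5 statements merged into one kernel-verified Lean document; each statement's English description precedes it below -/
import Mathlib

section
/- Let V = {v₁, …, v_r} be a finite subset of ℝᵈ and Π a collection of nonempty subsets of V such that the union of all members of Π equals V, no member of Π is contained in another, and the Min-Value Condition holds: for every β ∈ ℝᵈ there is a unique α ∈ ℝʳ with β = Σ αᵢ vᵢ and min{αᵢ : vᵢ ∈ P} = 0 for every P ∈ Π. Then for every subset S ⊆ V containing no member of Π, the elements of S are linearly independent over ℝ. -/
/-!
A linear relation `∑ cᵢ vᵢ = 0` supported on `S` vanishes somewhere on every `P ∈ Π`, since no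
member of `Π` lies in `S`. Then the positive part `c⁺` and the negative part `c⁻` are two
nonnegative coefficient vectors with minimum `0` on every `P ∈ Π` representing the same vector, so
the Min-Value Condition forces `c⁺ = c⁻`, that is `c = 0`.
-/

open Finset

/-- A pseudo-fan datum: a finite family of vectors `V : Fin r → ℝᵈ` together with a
collection `Pi` of subsets of the index set such that each member is nonempty,
the members cover the index set, and no member is contained in another. -/
def IsPseudoFan (d r : ℕ) (V : Fin r → (Fin d → ℝ)) (Pi : Finset (Finset (Fin r))) : Prop :=
  (∀ P ∈ Pi, P.Nonempty) ∧ (∀ i : Fin r, ∃ P ∈ Pi, i ∈ P) ∧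
  (∀ P ∈ Pi, ∀ Q ∈ Pi, P ⊆ Q → P = Q)

/-- The Min-Value Condition: every `β ∈ ℝᵈ` has a unique coefficient vector
`α ∈ ℝʳ` with `β = Σ αᵢ vᵢ` and `min {αᵢ : i ∈ P} = 0` for each `P ∈ Pi`. -/
def MVC (d r : ℕ) (V : Fin r → (Fin d → ℝ)) (Pi : Finset (Finset (Fin r))) : Prop :=
  ∀ β : Fin d → ℝ, ∃! α : Fin r → ℝ,
    β = ∑ i, α i • V i ∧
    ∀ P ∈ Pi, (∀ i ∈ P, 0 ≤ α i) ∧ ∃ i ∈ P, α i = 0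

/-- The cone generated by the vectors indexed by `S`: nonnegative combinations. -/
def coneOfIdx (d r : ℕ) (V : Fin r → (Fin d → ℝ)) (S : Finset (Fin r)) : Set (Fin d → ℝ) :=
  {x | ∃ lam : Fin r → ℝ, (∀ i, 0 ≤ lam i) ∧ (∀ i, i ∉ S → lam i = 0) ∧
    x = ∑ i, lam i • V i}

def MinZeroOn {r : ℕ} (Pi : Finset (Finset (Fin r))) (α : Fin r → ℝ) : Prop :=
  ∀ P ∈ Pi, (∀ i ∈ P, 0 ≤ α i) ∧ ∃ i ∈ P, α i = 0

lemma MinZeroOn.of_nonneg_of_exists_eq_zero {r : ℕ} {Pi : Finset (Finset (Fin r))}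
    {α c : Fin r → ℝ} (hα : 0 ≤ α) (hc : ∀ P ∈ Pi, ∃ i ∈ P, c i = 0)
    (hαc : ∀ i, c i = 0 → α i = 0) : MinZeroOn Pi α := fun P hP =>
  ⟨fun i _ => hα i, let ⟨i, hiP, hci⟩ := hc P hP; ⟨i, hiP, hαc i hci⟩⟩

namespace MVC

variable {d r : ℕ} {V : Fin r → (Fin d → ℝ)} {Pi : Finset (Finset (Fin r))}

lemma eq_of_sum_smul_eq (hmvc : MVC d r V Pi) {α α' : Fin r → ℝ}
    (hα : MinZeroOn Pi α) (hα' : MinZeroOn Pi α') (h : ∑ i, α i • V i = ∑ i, α' i • V i) :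
    α = α' :=
  (hmvc _).unique ⟨rfl, hα⟩ ⟨h, hα'⟩

lemma eq_zero_of_sum_smul_eq_zero (hmvc : MVC d r V Pi) {c : Fin r → ℝ}
    (hc : ∑ i, c i • V i = 0) (hvanish : ∀ P ∈ Pi, ∃ i ∈ P, c i = 0) : c = 0 := by
  have hpos : MinZeroOn Pi c⁺ :=
    .of_nonneg_of_exists_eq_zero (posPart_nonneg c) hvanish fun i hi => by simp [hi]
  have hneg : MinZeroOn Pi c⁻ :=
    .of_nonneg_of_exists_eq_zero (negPart_nonneg c) hvanish fun i hi => by simp [hi]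
  have hsum : ∑ i, c⁺ i • V i = ∑ i, c⁻ i • V i := by
    rw [← sub_eq_zero, ← sum_sub_distrib, ← hc]
    simp only [← sub_smul, _root_.Pi.posPart_apply, _root_.Pi.negPart_apply, posPart_sub_negPart]
  rw [← posPart_sub_negPart c, hmvc.eq_of_sum_smul_eq hpos hneg hsum, sub_self]

end MVC

theorem stmt_4_general (d r : ℕ) (V : Fin r → (Fin d → ℝ)) (Pi : Finset (Finset (Fin r)))
    (hmvc : MVC d r V Pi)
    (S : Finset (Fin r)) (hS : ∀ P ∈ Pi, ¬ P ⊆ S) :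
    LinearIndependent ℝ (fun i : S => V i) := by
  classical
  refine linearIndepOn_finset_iff.mpr fun f hf i hi => ?_
  set c : Fin r → ℝ := fun j => if j ∈ S then f j else 0
  have hc : ∑ j, c j • V j = 0 := by simpa [c, ite_smul, sum_ite_mem] using hf
  have hvanish : ∀ P ∈ Pi, ∃ j ∈ P, c j = 0 := fun P hP => by
    obtain ⟨j, hjP, hjS⟩ := not_subset.mp (hS P hP)
    exact ⟨j, hjP, if_neg hjS⟩
  simpa [c, hi] using congrFun (hmvc.eq_zero_of_sum_smul_eq_zero hc hvanish) i

theorem stmt_4 (d r : ℕ) (V : Fin r → (Fin d → ℝ)) (Pi : Finset (Finset (Fin r)))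
    (hpf : IsPseudoFan d r V Pi) (hmvc : MVC d r V Pi)
    (S : Finset (Fin r)) (hS : ∀ P ∈ Pi, ¬ P ⊆ S) :
    LinearIndependent ℝ (fun i : S => V i) :=
  stmt_4_general d r V Pi hmvc S hS
end

section
/- Let (Σ, V, Π) be a d-dimensional pseudo-fan satisfying the Min-Value Condition. Then for every β ∈ ℝᵈ there exists a subset S ⊆ V containing no member of Π such that β is a nonnegative real linear combination of the elements of S; in particular the union of the cones of Σ is all of ℝᵈ. -/
open Finset

theorem sum_smul_mem_coneOfIdx_support {d r : ℕ} (V : Fin r → (Fin d → ℝ)) {α : Fin r → ℝ}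
    (hα : ∀ i, 0 ≤ α i) :
    ∑ i, α i • V i ∈ coneOfIdx d r V (univ.filter (α · ≠ 0)) :=
  ⟨α, hα, fun i hi => by simpa using hi, rfl⟩

theorem not_subset_support_of_exists_zero {r : ℕ} {α : Fin r → ℝ} {P : Finset (Fin r)}
    (hzero : ∃ i ∈ P, α i = 0) : ¬ P ⊆ univ.filter (α · ≠ 0) := by
  obtain ⟨i, hiP, hi⟩ := hzero
  intro hsub
  simpa [hi] using hsub hiP

/- The Min-Value coefficients of `β` are nonnegative, since every index lies in some member
of `Pi`, and vanish somewhere on each member; so their support contains no member of `Pi`. -/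
theorem stmt_5 (d r : ℕ) (V : Fin r → (Fin d → ℝ)) (Pi : Finset (Finset (Fin r)))
    (hpf : IsPseudoFan d r V Pi) (hmvc : MVC d r V Pi) (β : Fin d → ℝ) :
    ∃ S : Finset (Fin r), (∀ P ∈ Pi, ¬ P ⊆ S) ∧ β ∈ coneOfIdx d r V S := by
  obtain ⟨α, ⟨rfl, hmin⟩, -⟩ := hmvc β
  have hα : ∀ i, 0 ≤ α i := fun i => by
    obtain ⟨P, hP, hiP⟩ := hpf.2.1 i
    exact (hmin P hP).1 i hiP
  exact ⟨_, fun P hP => not_subset_support_of_exists_zero (hmin P hP).2,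
    sum_smul_mem_coneOfIdx_support V hα⟩
end

section
/- Let (Σ, V, Π) be a pseudo-fan in ℝᵈ satisfying the Min-Value Condition, and let σ = ⟨S⟩₍≥0₎, τ = ⟨T⟩₍≥0₎ be two cones of Σ (S, T ⊆ V containing no member of Π). Then σ ∩ τ = ⟨S ∩ T⟩₍≥0₎. -/
/-!
A point of a cone `⟨S⟩≥0` with `S` containing no member of `Π` is a nonnegative combination whose
coefficients vanish off `S`, so every `P ∈ Π` has a zero coefficient: these coefficients are the
Min-Value coefficients of the point. By uniqueness, a point of `σ ∩ τ` has one coefficient vector,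
vanishing off `S` and off `T`, hence off `S ∩ T`.
-/

open Finset

lemma coneOfIdx_mono {d r : ℕ} (V : Fin r → (Fin d → ℝ)) {S T : Finset (Fin r)} (h : S ⊆ T) :
    coneOfIdx d r V S ⊆ coneOfIdx d r V T := by
  rintro x ⟨lam, hl0, hlS, rfl⟩
  exact ⟨lam, hl0, fun i hi => hlS i fun hiS => hi (h hiS), rfl⟩

lemma minValue_of_nonneg_of_eq_zero_off {r : ℕ} {Pi : Finset (Finset (Fin r))}
    {U : Finset (Fin r)} (hU : ∀ P ∈ Pi, ¬ P ⊆ U) {c : Fin r → ℝ} (hc0 : ∀ i, 0 ≤ c i)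
    (hcU : ∀ i, i ∉ U → c i = 0) :
    ∀ P ∈ Pi, (∀ i ∈ P, 0 ≤ c i) ∧ ∃ i ∈ P, c i = 0 := by
  intro P hP
  obtain ⟨i, hiP, hiU⟩ := not_subset.mp (hU P hP)
  exact ⟨fun j _ => hc0 j, i, hiP, hcU i hiU⟩

lemma MVC.cone_coeff_eq {d r : ℕ} {V : Fin r → (Fin d → ℝ)} {Pi : Finset (Finset (Fin r))}
    (hmvc : MVC d r V Pi) {S T : Finset (Fin r)} (hS : ∀ P ∈ Pi, ¬ P ⊆ S)
    (hT : ∀ P ∈ Pi, ¬ P ⊆ T) {lam mu : Fin r → ℝ} (hl0 : ∀ i, 0 ≤ lam i)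
    (hlS : ∀ i, i ∉ S → lam i = 0) (hm0 : ∀ i, 0 ≤ mu i) (hmT : ∀ i, i ∉ T → mu i = 0)
    (h : ∑ i, lam i • V i = ∑ i, mu i • V i) : lam = mu :=
  (hmvc _).unique ⟨rfl, minValue_of_nonneg_of_eq_zero_off hS hl0 hlS⟩
    ⟨h, minValue_of_nonneg_of_eq_zero_off hT hm0 hmT⟩

theorem stmt_6_general (d r : ℕ) (V : Fin r → (Fin d → ℝ)) (Pi : Finset (Finset (Fin r)))
    (hmvc : MVC d r V Pi)
    (S T : Finset (Fin r)) (hS : ∀ P ∈ Pi, ¬ P ⊆ S) (hT : ∀ P ∈ Pi, ¬ P ⊆ T) :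
    coneOfIdx d r V S ∩ coneOfIdx d r V T = coneOfIdx d r V (S ∩ T) := by
  refine Set.Subset.antisymm ?_ fun x hx =>
    ⟨coneOfIdx_mono V inter_subset_left hx, coneOfIdx_mono V inter_subset_right hx⟩
  rintro x ⟨⟨lam, hl0, hlS, rfl⟩, ⟨mu, hm0, hmT, hmx⟩⟩
  have hlm : lam = mu := hmvc.cone_coeff_eq hS hT hl0 hlS hm0 hmT hmx
  refine ⟨lam, hl0, fun i hi => ?_, rfl⟩
  by_cases hiS : i ∈ S
  · rw [hlm]
    exact hmT i fun hiT => hi (mem_inter.mpr ⟨hiS, hiT⟩)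
  · exact hlS i hiS

theorem stmt_6 (d r : ℕ) (V : Fin r → (Fin d → ℝ)) (Pi : Finset (Finset (Fin r)))
    (hpf : IsPseudoFan d r V Pi) (hmvc : MVC d r V Pi)
    (S T : Finset (Fin r)) (hS : ∀ P ∈ Pi, ¬ P ⊆ S) (hT : ∀ P ∈ Pi, ¬ P ⊆ T) :
    coneOfIdx d r V S ∩ coneOfIdx d r V T = coneOfIdx d r V (S ∩ T) :=
  stmt_6_general d r V Pi hmvc S T hS hT
end

section
/- Let d₁ ≥ d₂ > 0 and let y'_(i,j) (for (i,j) in I = ({0,…,d₁}×{0,…,d₂}) \ {(0,0),(d₁,d₂)}, extended by y'_(p,q) = 0 for (p,q) ∉ I) be real numbers satisfying Σ_{j=0}^{d₂} y'_(i,j) ≤ 0 for i = 1,…,d₁ and Σ_{i=0}^{d₁} y'_(i,j) ≤ 0 for j = 1,…,d₂. Define Δ_(p,q)^(s,t) := Σ_{k=p}^{s} Σ_{l=q}^{t} y'_(k,l) if p ≤ s and q ≤ t, and 0 otherwise. Then the system x_(i+1,j) + x_(i,j+1) = max{ y'_(i,j) + x_(i,j) + x_(i+1,j+1), Δ_(i+1,0)^(d₁,j-1)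 + Δ_(0,j+1)^(i-1,d₂) } for all (i,j) ∈ I, where x_(s,t) := 0 whenever (s,t) ∉ {1,…,d₁}×{1,…,d₂}, has the unique solution x_(i,j) = max{ Δ_(i,0)^(d₁,j-1), Δ_(0,j)^(i-1,d₂) }. -/
open Finset

/-- The rectangular partial sum `Δ_(p,q)^(s,t) = Σ_{k=p}^{s} Σ_{l=q}^{t} y' (k,l)`,
set to `0` unless `p ≤ s` and `q ≤ t`. -/
noncomputable def Delta (y' : ℤ × ℤ → ℝ) (p q s t : ℤ) : ℝ :=
  if p ≤ s ∧ q ≤ t then ∑ k ∈ Finset.Icc p s, ∑ l ∈ Finset.Icc q t, y' (k, l) else 0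

/-!
Write `P s`, `Q t` and `T s t` for the sums of `y'` over the rows `≥ s`, over the columns `≥ t`
and over the block `[s, d₁] × [t, d₂]`. Then `max (Δ_(s,0)^(d₁,t-1)) (Δ_(0,t)^(s-1,d₂))`
equals `max (P s) (Q t) - T s t`, the mixed second difference of `T` is `y'`, and the row and
column hypotheses make `P` and `Q` nondecreasing; the equations then reduce to the lattice
identity `max_add_max_of_le`.

For uniqueness, summing `y' + mixedDiff x ≤ 0` over a rectangle touching the boundary shows that
every solution `x` dominates the max formula `X`. The difference `x - X` is then nonnegative,
vanishes off the box, and has nonnegative mixed differences on all of `[0, d₁] × [0, d₂]`; their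
total telescopes to `0`, so they all vanish, and so does every partial sum `(x - X) (i, j)`.
-/

section IntervalSums

variable {M : Type*} [AddCommGroup M]

theorem sum_Icc_consecutive (f : ℤ → M) {a m b : ℤ} (ham : a ≤ m) (hmb : m ≤ b + 1) :
    ∑ k ∈ Icc a (m - 1), f k + ∑ k ∈ Icc m b, f k = ∑ k ∈ Icc a b, f k := by
  rw [← Ico_add_one_right_eq_Icc, ← Ico_add_one_right_eq_Icc, ← Ico_add_one_right_eq_Icc,
    sub_add_cancel, ← sum_union (Ico_disjoint_Ico_consecutive a m (b + 1)),
    Ico_union_Ico_eq_Ico ham hmb]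

theorem sum_Icc_sub_add_one (g : ℤ → M) {p s : ℤ} (h : p ≤ s + 1) :
    ∑ k ∈ Icc p s, (g k - g (k + 1)) = g p - g (s + 1) := by
  replace h : p - 1 ≤ s := by omega
  induction s, h using Int.leInduction with
  | base => simp
  | succ n hn ih =>
    rw [← sum_Icc_consecutive (fun k => g k - g (k + 1)) (by omega : p ≤ n + 1)
      (by omega : n + 1 ≤ n + 1 + 1),
      add_sub_cancel_right, Icc_self, sum_singleton, ih]
    abel

end IntervalSums

def mixedDiff {M : Type*} [AddCommGroup M] (f : ℤ × ℤ → M) (k l : ℤ) : M :=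
  f (k, l) + f (k + 1, l + 1) - f (k + 1, l) - f (k, l + 1)

theorem sum_Icc_mixedDiff {M : Type*} [AddCommGroup M] (f : ℤ × ℤ → M) {p q s t : ℤ}
    (hps : p ≤ s + 1) (hqt : q ≤ t + 1) :
    ∑ k ∈ Icc p s, ∑ l ∈ Icc q t, mixedDiff f k l =
      f (p, q) + f (s + 1, t + 1) - f (s + 1, q) - f (p, t + 1) := by
  have hrow (k : ℤ) : ∑ l ∈ Icc q t, mixedDiff f k l =
      (f (k, q) - f (k, t + 1)) - (f (k + 1, q) - f (k + 1, t + 1)) := by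
    refine (sum_congr rfl fun l _ => ?_).trans
      ((sum_Icc_sub_add_one (fun l => f (k, l) - f (k + 1, l)) hqt).trans (by abel))
    simp only [mixedDiff]
    abel
  simp only [hrow, sum_Icc_sub_add_one (fun k => f (k, q) - f (k, t + 1)) hps]
  abel

theorem Delta_eq_sum (y' : ℤ × ℤ → ℝ) (p q s t : ℤ) :
    Delta y' p q s t = ∑ k ∈ Icc p s, ∑ l ∈ Icc q t, y' (k, l) := by
  unfold Delta
  split_ifs with h
  · rfl
  · rcases not_and_or.1 h with h | h
    · simp [Icc_eq_empty h]
    · simp [Icc_eq_empty h]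

section Delta

variable (y' : ℤ × ℤ → ℝ)

theorem Delta_add_Delta_row {p q s t m : ℤ} (hpm : p ≤ m) (hms : m ≤ s + 1) :
    Delta y' p q (m - 1) t + Delta y' m q s t = Delta y' p q s t := by
  simp only [Delta_eq_sum]
  exact sum_Icc_consecutive _ hpm hms

theorem Delta_add_Delta_col {p q s t m : ℤ} (hqm : q ≤ m) (hmt : m ≤ t + 1) :
    Delta y' p q s (m - 1) + Delta y' p m s t = Delta y' p q s t := by
  simp only [Delta_eq_sum, ← sum_add_distrib]
  exact sum_congr rfl fun k _ => sum_Icc_consecutive _ hqm hmt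

theorem Delta_eq_zero_of_row_lt {p q s t : ℤ} (h : s < p) : Delta y' p q s t = 0 := by
  simp [Delta_eq_sum, Icc_eq_empty_of_lt h]

theorem Delta_eq_zero_of_col_lt {p q s t : ℤ} (h : t < q) : Delta y' p q s t = 0 := by
  simp [Delta_eq_sum, Icc_eq_empty_of_lt h]

theorem Delta_self (i j : ℤ) : Delta y' i j i j = y' (i, j) := by
  simp [Delta_eq_sum]

theorem mixedDiff_Delta {d₁ d₂ i j : ℤ} (hi : i ≤ d₁) (hj : j ≤ d₂) :
    mixedDiff (fun c => Delta y' c.1 c.2 d₁ d₂) i j = y' (i, j) := by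
  have h₁ := Delta_add_Delta_row y' (p := i) (q := j) (s := d₁) (t := d₂) (m := i + 1)
    (by omega) (by omega)
  have h₂ := Delta_add_Delta_row y' (p := i) (q := j + 1) (s := d₁) (t := d₂) (m := i + 1)
    (by omega) (by omega)
  have h₃ := Delta_add_Delta_col y' (p := i) (q := j) (s := i) (t := d₂) (m := j + 1)
    (by omega) (by omega)
  simp only [add_sub_cancel_right, Delta_self] at h₁ h₂ h₃
  simp only [mixedDiff]
  linarith

end Delta

theorem max_add_max_of_le {α : Type*} [AddCommGroup α] [LinearOrder α] [IsOrderedAddMonoid α]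
    {p p' q q' : α} (hp : p ≤ p') (hq : q ≤ q') :
    max p' q + max p q' = max (max p q + max p' q') (p' + q') := by
  grind

theorem add_eq_max_mixedDiff_of_eq_max_sub {x T : ℤ × ℤ → ℝ} {i j : ℤ} {p p' q q' : ℝ}
    (hp : p ≤ p') (hq : q ≤ q')
    (h₀₀ : x (i, j) = max p q - T (i, j)) (h₁₀ : x (i + 1, j) = max p' q - T (i + 1, j))
    (h₀₁ : x (i, j + 1) = max p q' - T (i, j + 1))
    (h₁₁ : x (i + 1, j + 1) = max p' q' - T (i + 1, j + 1)) :
    x (i + 1, j) + x (i, j + 1) =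
      max (mixedDiff T i j + x (i, j) + x (i + 1, j + 1))
        (p' - T (i + 1, j) + (q' - T (i, j + 1))) := by
  rw [h₀₀, h₁₀, h₀₁, h₁₁, mixedDiff]
  rw [show T (i, j) + T (i + 1, j + 1) - T (i + 1, j) - T (i, j + 1) + (max p q - T (i, j)) +
      (max p' q' - T (i + 1, j + 1)) = max p q + max p' q' - (T (i + 1, j) + T (i, j + 1)) by ring,
    show p' - T (i + 1, j) + (q' - T (i, j + 1)) = p' + q' - (T (i + 1, j) + T (i, j + 1)) by ring,
    max_sub_sub_right, ← max_add_max_of_le hp hq]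
  ring

def SolvesSystem (y' : ℤ × ℤ → ℝ) (d₁ d₂ : ℤ) (x : ℤ × ℤ → ℝ) : Prop :=
  ∀ i j : ℤ, 0 ≤ i → i ≤ d₁ → 0 ≤ j → j ≤ d₂ → (i, j) ≠ (0, 0) → (i, j) ≠ (d₁, d₂) →
    x (i + 1, j) + x (i, j + 1) =
      max (y' (i, j) + x (i, j) + x (i + 1, j + 1))
        (Delta y' (i + 1) 0 d₁ (j - 1) + Delta y' 0 (j + 1) (i - 1) d₂)

noncomputable def maxSolution (y' : ℤ × ℤ → ℝ) (d₁ d₂ : ℤ) (c : ℤ × ℤ) : ℝ :=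
  if 1 ≤ c.1 ∧ c.1 ≤ d₁ ∧ 1 ≤ c.2 ∧ c.2 ≤ d₂ then
    max (Delta y' c.1 0 d₁ (c.2 - 1)) (Delta y' 0 c.2 (c.1 - 1) d₂)
  else 0

section MaxSolution

variable {y' : ℤ × ℤ → ℝ} {d₁ d₂ : ℤ}

theorem Delta_rows_nonpos
    (hrow : ∀ i : ℤ, 1 ≤ i → i ≤ d₁ → ∑ j ∈ Icc 0 d₂, y' (i, j) ≤ 0) {s : ℤ} (hs : 1 ≤ s) :
    Delta y' s 0 d₁ d₂ ≤ 0 := by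
  rw [Delta_eq_sum]
  exact sum_nonpos fun k hk => hrow k (by grind) (mem_Icc.1 hk).2

theorem Delta_cols_nonpos
    (hcol : ∀ j : ℤ, 1 ≤ j → j ≤ d₂ → ∑ i ∈ Icc 0 d₁, y' (i, j) ≤ 0) {t : ℤ} (ht : 1 ≤ t) :
    Delta y' 0 t d₁ d₂ ≤ 0 := by
  rw [Delta_eq_sum, sum_comm]
  exact sum_nonpos fun l hl => hcol l (by grind) (mem_Icc.1 hl).2

theorem Delta_rows_le_succ
    (hrow : ∀ i : ℤ, 1 ≤ i → i ≤ d₁ → ∑ j ∈ Icc 0 d₂, y' (i, j) ≤ 0) {i : ℤ} (hi : 1 ≤ i)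
    (hid : i ≤ d₁) : Delta y' i 0 d₁ d₂ ≤ Delta y' (i + 1) 0 d₁ d₂ := by
  have h := Delta_add_Delta_row y' (p := i) (q := 0) (s := d₁) (t := d₂) (m := i + 1)
    (by omega) (by omega)
  rw [add_sub_cancel_right, Delta_eq_sum y' i 0 i d₂, Icc_self, sum_singleton] at h
  linarith [hrow i hi hid]

theorem Delta_cols_le_succ
    (hcol : ∀ j : ℤ, 1 ≤ j → j ≤ d₂ → ∑ i ∈ Icc 0 d₁, y' (i, j) ≤ 0) {j : ℤ} (hj : 1 ≤ j)
    (hjd : j ≤ d₂) : Delta y' 0 j d₁ d₂ ≤ Delta y' 0 (j + 1) d₁ d₂ := by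
  have h := Delta_add_Delta_col y' (p := 0) (q := j) (s := d₁) (t := d₂) (m := j + 1)
    (by omega) (by omega)
  rw [add_sub_cancel_right, Delta_eq_sum y' 0 j d₁ j, Icc_self, sum_comm, sum_singleton] at h
  linarith [hcol j hj hjd]

theorem maxSolution_of_not_mem {s t : ℤ} (h : ¬ (1 ≤ s ∧ s ≤ d₁ ∧ 1 ≤ t ∧ t ≤ d₂)) :
    maxSolution y' d₁ d₂ (s, t) = 0 :=
  if_neg h

theorem maxSolution_eq_max_sub
    (hrow : ∀ i : ℤ, 1 ≤ i → i ≤ d₁ → ∑ j ∈ Icc 0 d₂, y' (i, j) ≤ 0)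
    (hcol : ∀ j : ℤ, 1 ≤ j → j ≤ d₂ → ∑ i ∈ Icc 0 d₁, y' (i, j) ≤ 0)
    {s t : ℤ} (hs : 1 ≤ s) (hsd : s ≤ d₁ + 1) (ht : 1 ≤ t) (htd : t ≤ d₂ + 1) :
    maxSolution y' d₁ d₂ (s, t) =
      max (Delta y' s 0 d₁ d₂) (Delta y' 0 t d₁ d₂) - Delta y' s t d₁ d₂ := by
  unfold maxSolution
  split_ifs with h
  · rw [eq_sub_of_add_eq (Delta_add_Delta_col y' (by omega : 0 ≤ t) htd),
      eq_sub_of_add_eq (Delta_add_Delta_row y' (by omega : 0 ≤ s) hsd), max_sub_sub_right]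
  · rcases (by omega : s = d₁ + 1 ∨ t = d₂ + 1) with rfl | rfl
    · rw [Delta_eq_zero_of_row_lt y' (lt_add_one d₁), Delta_eq_zero_of_row_lt y' (lt_add_one d₁),
        max_eq_left (Delta_cols_nonpos hcol ht), sub_zero]
    · rw [Delta_eq_zero_of_col_lt y' (lt_add_one d₂), Delta_eq_zero_of_col_lt y' (lt_add_one d₂),
        max_eq_right (Delta_rows_nonpos hrow hs), sub_zero]

theorem maxSolution_solves
    (hrow : ∀ i : ℤ, 1 ≤ i → i ≤ d₁ → ∑ j ∈ Icc 0 d₂, y' (i, j) ≤ 0)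
    (hcol : ∀ j : ℤ, 1 ≤ j → j ≤ d₂ → ∑ i ∈ Icc 0 d₁, y' (i, j) ≤ 0) :
    SolvesSystem y' d₁ d₂ (maxSolution y' d₁ d₂) := by
  intro i j hi hid hj hjd h₀₀ _
  have hX {s t : ℤ} := @maxSolution_eq_max_sub y' d₁ d₂ hrow hcol s t
  rw [← mixedDiff_Delta y' hid hjd,
    eq_sub_of_add_eq (Delta_add_Delta_col y' (p := i + 1) (s := d₁) (t := d₂) hj (by omega)),
    eq_sub_of_add_eq (Delta_add_Delta_row y' (q := j + 1) (s := d₁) (t := d₂) hi (by omega))]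
  -- on the boundary lines the zero values of `maxSolution` still have the shape `max p q - T`,
  -- with the missing `p` (resp. `q`) replaced by a small enough `min`
  rcases hi.eq_or_lt with rfl | hi
  · have hj : 1 ≤ j := by grind
    refine add_eq_max_mixedDiff_of_eq_max_sub (p := min (Delta y' 0 j d₁ d₂) (Delta y' 1 0 d₁ d₂))
      (min_le_right _ _) (Delta_cols_le_succ hcol hj hjd) ?_ ?_ ?_ ?_
    · rw [maxSolution_of_not_mem (by omega), max_eq_right (min_le_left _ _), sub_self]
    · exact hX le_rfl (by omega) hj (by omega)
    · rw [maxSolution_of_not_mem (by omega),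
        max_eq_right ((min_le_left _ _).trans (Delta_cols_le_succ hcol hj hjd)), sub_self]
    · exact hX le_rfl (by omega) (by omega) (by omega)
  rcases hj.eq_or_lt with rfl | hj
  · refine add_eq_max_mixedDiff_of_eq_max_sub (q := min (Delta y' i 0 d₁ d₂) (Delta y' 0 1 d₁ d₂))
      (Delta_rows_le_succ hrow hi hid) (min_le_right _ _) ?_ ?_ ?_ ?_
    · rw [maxSolution_of_not_mem (by omega), max_eq_left (min_le_left _ _), sub_self]
    · rw [maxSolution_of_not_mem (by omega),
        max_eq_left ((min_le_left _ _).trans (Delta_rows_le_succ hrow hi hid)), sub_self]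
    · exact hX hi (by omega) le_rfl (by omega)
    · exact hX (by omega) (by omega) le_rfl (by omega)
  refine add_eq_max_mixedDiff_of_eq_max_sub (Delta_rows_le_succ hrow hi hid)
    (Delta_cols_le_succ hcol hj hjd)
    (hX ?_ ?_ ?_ ?_) (hX ?_ ?_ ?_ ?_) (hX ?_ ?_ ?_ ?_) (hX ?_ ?_ ?_ ?_) <;> omega

end MaxSolution

theorem Delta_le_of_add_mixedDiff_nonpos {y' x : ℤ × ℤ → ℝ} {p q s t : ℤ}
    (hps : p ≤ s + 1) (hqt : q ≤ t + 1)
    (h : ∀ k ∈ Icc p s, ∀ l ∈ Icc q t, y' (k, l) + mixedDiff x k l ≤ 0) :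
    Delta y' p q s t ≤ x (s + 1, q) + x (p, t + 1) - x (p, q) - x (s + 1, t + 1) := by
  calc Delta y' p q s t ≤ ∑ k ∈ Icc p s, ∑ l ∈ Icc q t, -mixedDiff x k l := by
        rw [Delta_eq_sum]
        exact sum_le_sum fun k hk => sum_le_sum fun l hl => by linarith [h k hk l hl]
    _ = _ := by
        simp only [sum_neg_distrib, sum_Icc_mixedDiff x hps hqt]
        ring

theorem eq_zero_of_mixedDiff_nonneg {D : ℤ × ℤ → ℝ} {d₁ d₂ : ℤ}
    (hD0 : ∀ s t : ℤ, ¬ (1 ≤ s ∧ s ≤ d₁ ∧ 1 ≤ t ∧ t ≤ d₂) → D (s, t) = 0)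
    (hD : ∀ k ∈ Icc 0 d₁, ∀ l ∈ Icc 0 d₂, 0 ≤ mixedDiff D k l) (c : ℤ × ℤ) : D c = 0 := by
  obtain ⟨i, j⟩ := c
  by_cases hij : 1 ≤ i ∧ i ≤ d₁ ∧ 1 ≤ j ∧ j ≤ d₂
  swap
  · exact hD0 i j hij
  have htotal := sum_Icc_mixedDiff D (p := 0) (q := 0) (s := d₁) (t := d₂) (by omega) (by omega)
  simp (disch := omega) only [hD0, add_zero, sub_zero] at htotal
  have hzero : ∀ k ∈ Icc 0 d₁, ∀ l ∈ Icc 0 d₂, mixedDiff D k l = 0 := by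
    have hrows := (sum_eq_zero_iff_of_nonneg fun k hk => sum_nonneg (hD k hk)).1 htotal
    exact fun k hk => (sum_eq_zero_iff_of_nonneg (hD k hk)).1 (hrows k hk)
  have hcorner := sum_Icc_mixedDiff D (p := 0) (q := 0) (s := i - 1) (t := j - 1)
    (by omega) (by omega)
  rw [sum_eq_zero fun k hk => sum_eq_zero fun l hl =>
    hzero k (by grind) l (by grind)] at hcorner
  simp (disch := omega) only [sub_add_cancel, hD0, zero_add, sub_zero] at hcorner
  exact hcorner.symm

namespace SolvesSystem

variable {y' x X : ℤ × ℤ → ℝ} {d₁ d₂ : ℤ}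

theorem add_mixedDiff_nonpos (hx : SolvesSystem y' d₁ d₂ x) {k l : ℤ}
    (hk : 0 ≤ k) (hkd : k ≤ d₁) (hl : 0 ≤ l) (hld : l ≤ d₂)
    (h₀₀ : (k, l) ≠ (0, 0)) (hdd : (k, l) ≠ (d₁, d₂)) :
    y' (k, l) + mixedDiff x k l ≤ 0 := by
  have := hx k l hk hkd hl hld h₀₀ hdd
  have := le_max_left (y' (k, l) + x (k, l) + x (k + 1, l + 1))
    (Delta y' (k + 1) 0 d₁ (l - 1) + Delta y' 0 (l + 1) (k - 1) d₂)
  simp only [mixedDiff]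
  linarith

theorem maxSolution_le (hx : SolvesSystem y' d₁ d₂ x)
    (hx0 : ∀ s t : ℤ, ¬ (1 ≤ s ∧ s ≤ d₁ ∧ 1 ≤ t ∧ t ≤ d₂) → x (s, t) = 0) (c : ℤ × ℤ) :
    maxSolution y' d₁ d₂ c ≤ x c := by
  obtain ⟨i, j⟩ := c
  by_cases hij : 1 ≤ i ∧ i ≤ d₁ ∧ 1 ≤ j ∧ j ≤ d₂
  swap
  · rw [maxSolution_of_not_mem hij, hx0 i j hij]
  refine (if_pos hij).trans_le (max_le ?_ ?_)
  · have := Delta_le_of_add_mixedDiff_nonpos (x := x) (p := i) (q := 0) (s := d₁) (t := j - 1)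
      (by omega) (by omega) fun k hk l hl => hx.add_mixedDiff_nonpos (by grind) (by grind)
        (by grind) (by grind) (by grind) (by grind)
    simp (disch := omega) only [sub_add_cancel, hx0] at this
    linarith
  · have := Delta_le_of_add_mixedDiff_nonpos (x := x) (p := 0) (q := j) (s := i - 1) (t := d₂)
      (by omega) (by omega) fun k hk l hl => hx.add_mixedDiff_nonpos (by grind) (by grind)
        (by grind) (by grind) (by grind) (by grind)
    simp (disch := omega) only [sub_add_cancel, hx0] at this
    linarith

theorem mixedDiff_sub_nonneg (hx : SolvesSystem y' d₁ d₂ x) (hX : SolvesSystem y' d₁ d₂ X)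
    (hx0 : ∀ s t : ℤ, ¬ (1 ≤ s ∧ s ≤ d₁ ∧ 1 ≤ t ∧ t ≤ d₂) → x (s, t) = 0)
    (hX0 : ∀ s t : ℤ, ¬ (1 ≤ s ∧ s ≤ d₁ ∧ 1 ≤ t ∧ t ≤ d₂) → X (s, t) = 0)
    (hle : ∀ c, X c ≤ x c) :
    ∀ k ∈ Icc 0 d₁, ∀ l ∈ Icc 0 d₂, 0 ≤ mixedDiff (x - X) k l := by
  intro k hk l hl
  rw [mem_Icc] at hk hl
  simp only [mixedDiff, Pi.sub_apply]
  -- at the two excluded corners the mixed difference is a single value of `x - X`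
  by_cases h₀₀ : (k, l) = (0, 0)
  · obtain ⟨rfl, rfl⟩ := Prod.mk.inj h₀₀
    simp (disch := omega) only [hx0, hX0]
    linarith [hle (0 + 1, 0 + 1)]
  by_cases hdd : (k, l) = (d₁, d₂)
  · obtain ⟨rfl, rfl⟩ := Prod.mk.inj hdd
    simp (disch := omega) only [hx0, hX0]
    linarith [hle (k, l)]
  have ex := hx k l hk.1 hk.2 hl.1 hl.2 h₀₀ hdd
  have eX := hX k l hk.1 hk.2 hl.1 hl.2 h₀₀ hdd
  have hmax : max (y' (k, l) + x (k, l) + x (k + 1, l + 1))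
        (Delta y' (k + 1) 0 d₁ (l - 1) + Delta y' 0 (l + 1) (k - 1) d₂) ≤
      max (y' (k, l) + X (k, l) + X (k + 1, l + 1))
        (Delta y' (k + 1) 0 d₁ (l - 1) + Delta y' 0 (l + 1) (k - 1) d₂) +
      (x (k, l) - X (k, l) + (x (k + 1, l + 1) - X (k + 1, l + 1))) := by
    rw [← max_add_add_right]
    exact max_le_max (by linarith [hle (k, l), hle (k + 1, l + 1)])
      (by linarith [hle (k, l), hle (k + 1, l + 1)])
  linarith

theorem eq_maxSolution
    (hrow : ∀ i : ℤ, 1 ≤ i → i ≤ d₁ → ∑ j ∈ Icc 0 d₂, y' (i, j) ≤ 0)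
    (hcol : ∀ j : ℤ, 1 ≤ j → j ≤ d₂ → ∑ i ∈ Icc 0 d₁, y' (i, j) ≤ 0)
    (hx : SolvesSystem y' d₁ d₂ x)
    (hx0 : ∀ s t : ℤ, ¬ (1 ≤ s ∧ s ≤ d₁ ∧ 1 ≤ t ∧ t ≤ d₂) → x (s, t) = 0) :
    x = maxSolution y' d₁ d₂ := by
  have hD := eq_zero_of_mixedDiff_nonneg (D := x - maxSolution y' d₁ d₂)
    (fun s t h => by simp [hx0 s t h, maxSolution_of_not_mem h])
    (hx.mixedDiff_sub_nonneg (maxSolution_solves hrow hcol) hx0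
      (fun _ _ => maxSolution_of_not_mem) (hx.maxSolution_le hx0))
  exact funext fun c => sub_eq_zero.1 (hD c)

end SolvesSystem

theorem stmt_9_general (d₁ d₂ : ℤ)
    (y' : ℤ × ℤ → ℝ)
    (hrow : ∀ i : ℤ, 1 ≤ i → i ≤ d₁ → ∑ j ∈ Finset.Icc 0 d₂, y' (i, j) ≤ 0)
    (hcol : ∀ j : ℤ, 1 ≤ j → j ≤ d₂ → ∑ i ∈ Finset.Icc 0 d₁, y' (i, j) ≤ 0)
    (x : ℤ × ℤ → ℝ)
    -- `x` vanishes outside `{1,…,d₁} × {1,…,d₂}`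
    (hx0 : ∀ s t : ℤ, ¬ (1 ≤ s ∧ s ≤ d₁ ∧ 1 ≤ t ∧ t ≤ d₂) → x (s, t) = 0) :
    -- the system of equations over `I` holds iff `x` is given by the max formula
    (∀ i j : ℤ, 0 ≤ i → i ≤ d₁ → 0 ≤ j → j ≤ d₂ →
        (i, j) ≠ (0, 0) → (i, j) ≠ (d₁, d₂) →
        x (i + 1, j) + x (i, j + 1) =
          max (y' (i, j) + x (i, j) + x (i + 1, j + 1))
            (Delta y' (i + 1) 0 d₁ (j - 1) + Delta y' 0 (j + 1) (i - 1) d₂)) ↔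
    (∀ i j : ℤ, 1 ≤ i → i ≤ d₁ → 1 ≤ j → j ≤ d₂ →
        x (i, j) = max (Delta y' i 0 d₁ (j - 1)) (Delta y' 0 j (i - 1) d₂)) := by
  constructor
  · intro hsys i j hi hid hj hjd
    rw [SolvesSystem.eq_maxSolution hrow hcol hsys hx0]
    exact if_pos ⟨hi, hid, hj, hjd⟩
  · intro hform
    obtain rfl : x = maxSolution y' d₁ d₂ := funext fun ⟨s, t⟩ => by
      by_cases h : 1 ≤ s ∧ s ≤ d₁ ∧ 1 ≤ t ∧ t ≤ d₂
      · exact (hform s t h.1 h.2.1 h.2.2.1 h.2.2.2).trans (if_pos h).symm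
      · rw [hx0 s t h, maxSolution_of_not_mem h]
    exact maxSolution_solves hrow hcol

theorem stmt_9 (d₁ d₂ : ℤ) (hd₂ : 0 < d₂) (hd₁₂ : d₂ ≤ d₁)
    (y' : ℤ × ℤ → ℝ)
    -- `y'` vanishes outside `I = ({0,…,d₁} × {0,…,d₂}) \ {(0,0), (d₁,d₂)}`
    (hy'0 : ∀ p q : ℤ, ¬ (0 ≤ p ∧ p ≤ d₁ ∧ 0 ≤ q ∧ q ≤ d₂ ∧
        (p, q) ≠ (0, 0) ∧ (p, q) ≠ (d₁, d₂)) → y' (p, q) = 0)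
    (hrow : ∀ i : ℤ, 1 ≤ i → i ≤ d₁ → ∑ j ∈ Finset.Icc 0 d₂, y' (i, j) ≤ 0)
    (hcol : ∀ j : ℤ, 1 ≤ j → j ≤ d₂ → ∑ i ∈ Finset.Icc 0 d₁, y' (i, j) ≤ 0)
    (x : ℤ × ℤ → ℝ)
    -- `x` vanishes outside `{1,…,d₁} × {1,…,d₂}`
    (hx0 : ∀ s t : ℤ, ¬ (1 ≤ s ∧ s ≤ d₁ ∧ 1 ≤ t ∧ t ≤ d₂) → x (s, t) = 0) :
    -- the system of equations over `I` holds iff `x` is given by the max formula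
    (∀ i j : ℤ, 0 ≤ i → i ≤ d₁ → 0 ≤ j → j ≤ d₂ →
        (i, j) ≠ (0, 0) → (i, j) ≠ (d₁, d₂) →
        x (i + 1, j) + x (i, j + 1) =
          max (y' (i, j) + x (i, j) + x (i + 1, j + 1))
            (Delta y' (i + 1) 0 d₁ (j - 1) + Delta y' 0 (j + 1) (i - 1) d₂)) ↔
    (∀ i j : ℤ, 1 ≤ i → i ≤ d₁ → 1 ≤ j → j ≤ d₂ →
        x (i, j) = max (Delta y' i 0 d₁ (j - 1)) (Delta y' 0 j (i - 1) d₂)) :=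
  stmt_9_general d₁ d₂ y' hrow hcol x hx0
end

section
/- The 5×10 matrix V₍₁,₁₎ and the 5×10 matrix W₍₁,₁₎ satisfy: the sequence 0 → ℤ⁵ →^{tV₍₁,₁₎} ℤ¹⁰ →^{W₍₁,₁₎} ℤ⁵ → 0 is exact; i.e., tV₍₁,₁₎ is injective, W₍₁,₁₎ is surjective, and the image of tV₍₁,₁₎ equals the kernel of W₍₁,₁₎. -/
/-!
The sequence splits. Projecting onto the coordinates `0, 1, 4, 5, 9` is a left inverse `L` of
`V₍₁,₁₎ᵀ`, and there is a right inverse `S` of `W₍₁,₁₎` with `V₍₁,₁₎ᵀ L + S W₍₁,₁₎ = 1`. Hence every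
`y ∈ ker W₍₁,₁₎` equals `V₍₁,₁₎ᵀ (L y)`; the required matrix identities are finite integer
computations.
-/

/-- The weight matrix `W₍₁,₁₎`. -/
def W11 : Matrix (Fin 5) (Fin 10) ℤ :=
  !![1, 0, 1, 0, 0, 0, 0, 0, 0, -1;
     0, 1, 0, 1, 0, 0, 0, 0, -1, 0;
     0, 0, 0, 0, 1, 0, 1, 0, -1, 0;
     0, 0, 0, 0, 0, 1, 0, 1, 0, -1;
     0, 0, 0, 0, 0, 0, 0, 0, 1, 1]

/-- The vertex matrix `V₍₁,₁₎`. -/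
def V11 : Matrix (Fin 5) (Fin 10) ℤ :=
  !![1, 0, -1, 0, 0, 0, 0, 0, 0, 0;
     0, 1, 0, -1, 0, 0, 0, 0, 0, 0;
     0, 0, 0, 0, 1, 0, -1, 0, 0, 0;
     0, 0, 0, 0, 0, 1, 0, -1, 0, 0;
     0, 0, 1, -1, 0, 0, -1, 1, -1, 1]

namespace Matrix

variable {m n p R : Type*} [CommSemiring R] [Fintype m] [Fintype n] [Fintype p]

theorem mulVecLin_injective_of_mul_eq_one [DecidableEq n] {A : Matrix m n R}
    {L : Matrix n m R} (h : L * A = 1) : Function.Injective A.mulVecLin :=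
  Function.LeftInverse.injective (g := L.mulVec) fun x => by
    simp [mulVec_mulVec, h]

theorem range_mulVecLin_eq_ker_of_mul_add_mul_eq_one [DecidableEq m] {A : Matrix m n R}
    {B : Matrix p m R} {L : Matrix n m R} {S : Matrix m p R} (hBA : B * A = 0)
    (hsplit : A * L + S * B = 1) : LinearMap.range A.mulVecLin = LinearMap.ker B.mulVecLin := by
  ext y
  simp only [LinearMap.mem_range, LinearMap.mem_ker, mulVecLin_apply]
  constructor
  · rintro ⟨x, rfl⟩
    rw [mulVec_mulVec, hBA, zero_mulVec]
  · intro hy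
    refine ⟨L *ᵥ y, ?_⟩
    calc A *ᵥ (L *ᵥ y) = A *ᵥ (L *ᵥ y) + S *ᵥ (B *ᵥ y) := by rw [hy, mulVec_zero, add_zero]
      _ = (A * L + S * B) *ᵥ y := by rw [add_mulVec, mulVec_mulVec, mulVec_mulVec]
      _ = y := by rw [hsplit, one_mulVec]

end Matrix

def retractionV11Transpose : Matrix (Fin 5) (Fin 10) ℤ :=
  !![1, 0, 0, 0, 0, 0, 0, 0, 0, 0;
     0, 1, 0, 0, 0, 0, 0, 0, 0, 0;
     0, 0, 0, 0, 1, 0, 0, 0, 0, 0;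
     0, 0, 0, 0, 0, 1, 0, 0, 0, 0;
     0, 0, 0, 0, 0, 0, 0, 0, 0, 1]

def sectionW11 : Matrix (Fin 10) (Fin 5) ℤ :=
  !![0, 0, 0, 0, 0; 0, 0, 0, 0, 0; 1, 0, 0, 0, 0; 0, 1, 0, 0, 1; 0, 0, 0, 0, 0;
     0, 0, 0, 0, 0; 0, 0, 1, 0, 1; 0, 0, 0, 1, 0; 0, 0, 0, 0, 1; 0, 0, 0, 0, 0]

theorem stmt_18 :
    Function.Injective (Matrix.mulVecLin V11.transpose) ∧
    Function.Surjective (Matrix.mulVecLin W11) ∧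
    LinearMap.range (Matrix.mulVecLin V11.transpose) =
      LinearMap.ker (Matrix.mulVecLin W11) :=
  ⟨Matrix.mulVecLin_injective_of_mul_eq_one (L := retractionV11Transpose) (by decide),
    Matrix.mulVec_surjective_iff_exists_right_inverse.2 ⟨sectionW11, by decide⟩,
    Matrix.range_mulVecLin_eq_ker_of_mul_add_mul_eq_one (L := retractionV11Transpose)
      (S := sectionW11) (by decide) (by decide)⟩
end
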